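/- Let H₀ = −d²/dx² on L²(0,∞) with Dirichlet boundary condition at 0, and W(x) = sin(x²). Then the operator W·(H₀+1)^{-1} (multiplication by W composed with the resolvent) is not compact. -/

import Mathlib

open MeasureTheory

/-- The integral kernel of `(H₀ + 1)⁻¹` where `H₀ = -d²/dx²` on `L²(0,∞)` with a Dirichlet
boundary condition at `0`: `G(x,y) = (e^{-|x-y|} - e^{-(x+y)})/2`. -/
noncomputable def dirichletKernel (x y : ℝ) : ℝ :=
  (Real.exp (-|x - y|) - Real.exp (-(x + y))) / 2

namespace Stmt11Aux

open Real Set intervalIntegral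

/-! ### Elementary bounds on the kernel -/

lemma kernel_nonneg {x y : ℝ} (hx : 0 ≤ x) (hy : 0 ≤ y) : 0 ≤ dirichletKernel x y := by
  have h1 : |x - y| ≤ x + y := abs_sub_le_iff.mpr ⟨by linarith, by linarith⟩
  have := Real.exp_le_exp.mpr (neg_le_neg h1)
  unfold dirichletKernel; linarith

lemma kernel_le_exp {x y : ℝ} : dirichletKernel x y ≤ Real.exp (-|x - y|) / 2 := by
  have := Real.exp_pos (-(x+y)); unfold dirichletKernel; linarith

lemma exp_neg_one : (1:ℝ)/3 ≤ Real.exp (-1) := by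
  have h : Real.exp 1 ≤ 3 := by linarith [Real.exp_one_lt_d9]
  have := one_div_le_one_div_of_le (Real.exp_pos 1) h
  rw [Real.exp_neg, inv_eq_one_div]; linarith

lemma exp_neg_three : Real.exp (-3) ≤ 1/8 := by
  have h : (8:ℝ) ≤ Real.exp 3 := by
    have h1 := Real.exp_one_gt_d9
    have : Real.exp 3 = Real.exp 1 * Real.exp 1 * Real.exp 1 := by
      rw [← Real.exp_add, ← Real.exp_add]; norm_num
    nlinarith
  rw [Real.exp_neg, inv_eq_one_div]
  linarith [one_div_le_one_div_of_le (by norm_num : (0:ℝ) < 8) h]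

lemma exp_neg_four : Real.exp (-4) ≤ 1/16 := by
  have h : (16:ℝ) ≤ Real.exp 4 := by
    have h1 := Real.exp_one_gt_d9
    have : Real.exp 4 = Real.exp 1 * Real.exp 1 * Real.exp 1 * Real.exp 1 := by
      rw [← Real.exp_add, ← Real.exp_add, ← Real.exp_add]; norm_num
    have h2 : (7.29:ℝ) ≤ Real.exp 1 * Real.exp 1 := by nlinarith
    nlinarith
  rw [Real.exp_neg, inv_eq_one_div]
  linarith [one_div_le_one_div_of_le (by norm_num : (0:ℝ) < 16) h]

lemma kernel_ge {x y : ℝ} (hxy : |x - y| ≤ 1) (hs : 4 ≤ x + y) :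
    1/8 ≤ dirichletKernel x y := by
  have h1 : Real.exp (-1) ≤ Real.exp (-|x - y|) := Real.exp_le_exp.mpr (by linarith)
  have h2 : Real.exp (-(x+y)) ≤ Real.exp (-4) := Real.exp_le_exp.mpr (by linarith)
  have := exp_neg_one; have := exp_neg_four
  unfold dirichletKernel; linarith

lemma kernel_small {x y : ℝ} (hxy : 3 ≤ |x - y|) : dirichletKernel x y ≤ 1/16 := by
  have h1 : Real.exp (-|x - y|) ≤ Real.exp (-3) := Real.exp_le_exp.mpr (by linarith)
  have := exp_neg_three
  have := kernel_le_exp (x := x) (y := y)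
  linarith

lemma kernel_cont (x : ℝ) : Continuous (fun y => dirichletKernel x y) := by
  unfold dirichletKernel; fun_prop

lemma kernel_integrableOn (x a b : ℝ) :
    IntegrableOn (fun y => dirichletKernel x y) (Ioc a b) :=
  (kernel_cont x).integrableOn_Ioc

/-! ### The smoothed bump functions -/

noncomputable def g (a x : ℝ) : ℝ := ∫ y in Ioc a (a+1), dirichletKernel x y

lemma g_lower (a : ℝ) {x : ℝ}
    (hker : ∀ y ∈ Ioc a (a+1), (1:ℝ)/8 ≤ dirichletKernel x y) : 1/8 ≤ g a x := by
  have h := setIntegral_mono_on (f := fun _ => (1:ℝ)/8)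
    (g := fun y => dirichletKernel x y) (integrableOn_const (by simp))
    (kernel_integrableOn x a (a+1)) measurableSet_Ioc hker
  rwa [setIntegral_const, Real.volume_real_Ioc, show a + 1 - a = 1 by ring,
    max_eq_left zero_le_one, one_smul] at h

lemma g_upper (a x : ℝ) {c : ℝ}
    (hker : ∀ y ∈ Ioc a (a+1), dirichletKernel x y ≤ c) : g a x ≤ c := by
  have h := setIntegral_mono_on (f := fun y => dirichletKernel x y)
    (g := fun _ => c) (kernel_integrableOn x a (a+1))
    (integrableOn_const (by simp)) measurableSet_Ioc hker
  rwa [setIntegral_const, Real.volume_real_Ioc, show a + 1 - a = 1 by ring,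
    max_eq_left zero_le_one, one_smul] at h

/-! ### The oscillation lemma -/

lemma cos_int_bound (a : ℝ) (ha : 2 ≤ a) :
    |∫ x in a..(a+1), Real.cos (2 * x^2)| ≤ 5/16 := by
  have huicc : uIcc a (a+1) = Icc a (a+1) := uIcc_of_le (by linarith)
  have hpos : ∀ x ∈ uIcc a (a+1), 2 ≤ x := by
    intro x hx; rw [huicc] at hx; exact le_trans ha hx.1
  set u : ℝ → ℝ := fun x => (4*x)⁻¹ with hu_def
  set v : ℝ → ℝ := fun x => Real.sin (2 * x^2) with hv_def
  have hderivu : ∀ x ∈ uIcc a (a+1), HasDerivAt u (-(4*x^2)⁻¹) x := by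
    intro x hx
    have hx0 : (0:ℝ) < x := by linarith [hpos x hx]
    have h4 : HasDerivAt (fun x : ℝ => 4*x) 4 x := by
      simpa using (hasDerivAt_id x).const_mul (4:ℝ)
    have h := h4.inv (by positivity)
    refine h.congr_deriv ?_
    field_simp
  have hderivv : ∀ x ∈ uIcc a (a+1), HasDerivAt v (4*x * Real.cos (2*x^2)) x := by
    intro x _
    have h1 : HasDerivAt (fun x : ℝ => 2 * x^2) (4*x) x := by
      have h := (hasDerivAt_pow 2 x).const_mul (2:ℝ)
      refine h.congr_deriv ?_
      simp; ring
    have := (Real.hasDerivAt_sin (2*x^2)).comp x h1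
    simpa [hv_def, mul_comm, Function.comp_def] using this
  have hIu : IntervalIntegrable (fun x => -(4*x^2)⁻¹) volume a (a+1) := by
    apply ContinuousOn.intervalIntegrable
    apply ContinuousOn.neg
    apply ContinuousOn.inv₀ (by fun_prop)
    intro x hx; have := hpos x hx; positivity
  have hIv : IntervalIntegrable (fun x => 4*x * Real.cos (2*x^2)) volume a (a+1) := by
    apply ContinuousOn.intervalIntegrable; fun_prop
  have hparts := integral_mul_deriv_eq_deriv_mul hderivu hderivv hIu hIv
  have hcong : ∫ x in a..(a+1), Real.cos (2*x^2)
      = ∫ x in a..(a+1), u x * (4*x * Real.cos (2*x^2)) := by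
    apply integral_congr
    intro x hx
    have hx2 := hpos x hx
    have : x ≠ 0 := by intro h; rw [h] at hx2; norm_num at hx2
    simp only [hu_def]; field_simp
  rw [hcong, hparts]
  have bu : ∀ x : ℝ, 2 ≤ x → |u x| ≤ 1/8 := by
    intro x hx
    rw [hu_def]
    simp only
    rw [abs_inv, abs_of_pos (by linarith : (0:ℝ) < 4*x), inv_le_comm₀ (by linarith) (by norm_num)]
    linarith
  have bv : ∀ x : ℝ, |v x| ≤ 1 := fun x => Real.abs_sin_le_one _
  have hb1 : |u (a+1) * v (a+1)| ≤ 1/8 := by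
    rw [abs_mul]
    calc |u (a+1)| * |v (a+1)| ≤ (1/8) * 1 := by
          apply mul_le_mul (bu _ (by linarith)) (bv _) (abs_nonneg _) (by norm_num)
      _ = 1/8 := by norm_num
  have hb2 : |u a * v a| ≤ 1/8 := by
    rw [abs_mul]
    calc |u a| * |v a| ≤ (1/8) * 1 := by
          apply mul_le_mul (bu _ ha) (bv _) (abs_nonneg _) (by norm_num)
      _ = 1/8 := by norm_num
  have hb3 : |∫ x in a..(a+1), -(4*x^2)⁻¹ * v x| ≤ 1/16 := by
    have h := intervalIntegral.norm_integral_le_of_norm_le_const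
      (f := fun x => -(4*x^2)⁻¹ * v x) (a := a) (b := a+1) (C := 1/16) ?_
    · rw [Real.norm_eq_abs] at h
      calc |∫ x in a..(a+1), -(4*x^2)⁻¹ * v x| ≤ 1/16 * |a + 1 - a| := h
        _ = 1/16 := by norm_num
    · intro x hx
      have hx2 : 2 ≤ x := by
        rcases hx with ⟨h1, _⟩
        rw [min_eq_left (by linarith : a ≤ a+1)] at h1
        linarith
      rw [Real.norm_eq_abs, abs_mul, abs_neg, abs_inv,
        abs_of_pos (by positivity : (0:ℝ) < 4*x^2)]
      calc (4*x^2)⁻¹ * |v x| ≤ (4*x^2)⁻¹ * 1 := by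
            apply mul_le_mul_of_nonneg_left (bv x) (by positivity)
        _ ≤ 1/16 := by
            rw [mul_one, inv_le_comm₀ (by positivity) (by norm_num)]
            nlinarith
  calc |u (a+1) * v (a+1) - u a * v a - ∫ x in a..(a+1), -(4*x^2)⁻¹ * v x|
      ≤ |u (a+1) * v (a+1) - u a * v a| + |∫ x in a..(a+1), -(4*x^2)⁻¹ * v x| :=
        abs_sub _ _
    _ ≤ |u (a+1) * v (a+1)| + |u a * v a| + |∫ x in a..(a+1), -(4*x^2)⁻¹ * v x| := by
        linarith [abs_sub (u (a+1) * v (a+1)) (u a * v a)]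
    _ ≤ 5/16 := by linarith

lemma sin_sq_int_lower (a : ℝ) (ha : 2 ≤ a) :
    (1:ℝ)/4 ≤ ∫ x in Ioc a (a+1), (Real.sin (x^2))^2 := by
  have hle : a ≤ a + 1 := by linarith
  have h1 : ∫ x in Ioc a (a+1), (Real.sin (x^2))^2
      = ∫ x in a..(a+1), (Real.sin (x^2))^2 := (integral_of_le hle).symm
  have h2 : ∀ x : ℝ, (Real.sin (x^2))^2 = 1/2 - Real.cos (2*x^2)/2 := by
    intro x
    nlinarith [Real.sin_sq_add_cos_sq (x^2), Real.cos_two_mul (x^2)]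
  have h3 : (∫ x in a..(a+1), (Real.sin (x^2))^2)
      = (∫ x in a..(a+1), (1/2 - Real.cos (2*x^2)/2)) := by
    apply integral_congr; intro x _; exact h2 x
  have hIc : IntervalIntegrable (fun x => Real.cos (2*x^2)) volume a (a+1) := by
    apply ContinuousOn.intervalIntegrable; fun_prop
  have h4 : (∫ x in a..(a+1), (1/2 - Real.cos (2*x^2)/2))
      = (a+1-a) • (1/2 : ℝ) - (∫ x in a..(a+1), Real.cos (2*x^2)/2) := by
    rw [integral_sub intervalIntegrable_const (hIc.div_const 2),
      intervalIntegral.integral_const]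
  have h5 : (∫ x in a..(a+1), Real.cos (2*x^2)/2)
      = (∫ x in a..(a+1), Real.cos (2*x^2))/2 := by
    simpa using intervalIntegral.integral_div 2 (fun x => Real.cos (2*x^2)) (a := a) (b := a+1)
  have hbound := cos_int_bound a ha
  rw [h1, h3, h4, h5]
  have heq : (a+1-a) • (1/2:ℝ) = 1/2 := by rw [smul_eq_mul]; ring
  rw [heq]
  linarith [abs_le.mp hbound]

/-! ### L² facts -/

lemma norm_sq_L2 {α : Type*} [MeasurableSpace α] {ν : Measure α} (h : Lp ℂ 2 ν) :
    ‖h‖^2 = ∫ a, ‖h a‖^2 ∂ν := by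
  have h1 : ‖h‖^2 = RCLike.re (inner (𝕜 := ℂ) h h) := norm_sq_eq_re_inner h
  rw [h1, L2.inner_def, ← integral_re (L2.integrable_inner h h)]
  apply MeasureTheory.integral_congr_ae
  filter_upwards with a
  rw [← norm_sq_eq_re_inner (𝕜 := ℂ) (h a)]

lemma integrable_norm_sq {α : Type*} [MeasurableSpace α] {ν : Measure α} (h : Lp ℂ 2 ν) :
    Integrable (fun a => ‖h a‖^2) ν := by
  refine ((L2.integrable_inner (𝕜 := ℂ) h h).re).congr ?_
  filter_upwards with a
  exact (norm_sq_eq_re_inner (𝕜 := ℂ) (h a)).symm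

/-! ### The indicator test functions -/

local notation "μ" => volume.restrict (Ioi (0:ℝ))

lemma mu_Ioc_ne_top (a : ℝ) : μ (Ioc a (a+1)) ≠ ⊤ := by
  rw [Measure.restrict_apply measurableSet_Ioc]
  refine ne_top_of_le_ne_top ?_ (measure_mono inter_subset_left)
  rw [Real.volume_Ioc]
  exact ENNReal.ofReal_ne_top

lemma Ioc_subset_Ioi' {a : ℝ} (ha : 0 ≤ a) : Ioc a (a+1) ⊆ Ioi (0:ℝ) :=
  fun x hx => lt_of_le_of_lt ha hx.1

lemma mu_Ioc_eq_one {a : ℝ} (ha : 0 ≤ a) : μ (Ioc a (a+1)) = 1 := by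
  rw [Measure.restrict_apply measurableSet_Ioc,
    inter_eq_left.mpr (Ioc_subset_Ioi' ha), Real.volume_Ioc]
  norm_num

noncomputable def F (a : ℝ) : Lp ℂ 2 μ :=
  indicatorConstLp 2 measurableSet_Ioc (mu_Ioc_ne_top a) (1:ℂ)

lemma norm_F {a : ℝ} (ha : 0 ≤ a) : ‖F a‖ = 1 := by
  rw [F, norm_indicatorConstLp (by norm_num) (by norm_num), measureReal_def, mu_Ioc_eq_one ha]
  simp

lemma restrict_restrict_Ioc {a : ℝ} (ha : 0 ≤ a) :
    (μ).restrict (Ioc a (a+1)) = volume.restrict (Ioc a (a+1)) := by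
  rw [Measure.restrict_restrict measurableSet_Ioc,
    inter_eq_left.mpr (Ioc_subset_Ioi' ha)]

lemma integral_kernel_F (a : ℝ) (ha : 0 ≤ a) (x : ℝ) :
    ∫ y, (dirichletKernel x y : ℂ) * (F a) y ∂μ = ((g a x : ℝ) : ℂ) := by
  have h0 : ⇑(F a) =ᵐ[μ] (Ioc a (a+1)).indicator (fun _ => (1:ℂ)) :=
    indicatorConstLp_coeFn
  have h1 : (fun y => (dirichletKernel x y : ℂ) * (F a) y)
      =ᵐ[μ] (Ioc a (a+1)).indicator (fun y => (dirichletKernel x y : ℂ)) := by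
    filter_upwards [h0] with y hy
    rw [hy]
    by_cases hmem : y ∈ Ioc a (a+1)
    · simp [Set.indicator_of_mem hmem]
    · simp [Set.indicator_of_notMem hmem]
  rw [MeasureTheory.integral_congr_ae h1, MeasureTheory.integral_indicator measurableSet_Ioc,
    restrict_restrict_Ioc ha]
  have h2 : (∫ y in Ioc a (a+1), ((dirichletKernel x y : ℝ) : ℂ))
      = (((∫ y in Ioc a (a+1), dirichletKernel x y : ℝ)) : ℂ) := integral_ofReal
  simpa [g] using h2

end Stmt11Aux

/-- **(Last–Simon, Proposition 4.1 (1).)**  Let `H₀ = -d²/dx²` on `L²(0,∞)` with Dirichlet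
boundary condition at `0`, whose resolvent `R = (H₀+1)⁻¹` is the integral operator with kernel
`dirichletKernel`, and let `M_W` be multiplication by `W(x) = sin(x²)`.  Then `M_W ∘ R`
(i.e. `W·(H₀+1)⁻¹`) is not a compact operator. -/
theorem stmt11
    (R MW : Lp ℂ 2 (volume.restrict (Set.Ioi (0 : ℝ))) →L[ℂ]
      Lp ℂ 2 (volume.restrict (Set.Ioi (0 : ℝ))))
    (hR : ∀ f, ∀ᵐ x ∂(volume.restrict (Set.Ioi (0 : ℝ))),
      R f x = ∫ y, (dirichletKernel x y : ℂ) * f y ∂(volume.restrict (Set.Ioi (0 : ℝ))))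
    (hMW : ∀ f, ∀ᵐ x ∂(volume.restrict (Set.Ioi (0 : ℝ))),
      MW f x = (Real.sin (x ^ 2) : ℂ) * f x) :
    ¬ IsCompactOperator ⇑(MW.comp R) := by
  classical
  open Stmt11Aux Set in
  intro hcomp
  set T := MW.comp R with hT
  -- a.e. description of `T (F a)`
  have hTF : ∀ a : ℝ, 0 ≤ a → ⇑(T (F a)) =ᵐ[volume.restrict (Ioi (0:ℝ))]
      fun x => ((Real.sin (x^2) * g a x : ℝ) : ℂ) := by
    intro a ha
    have h1 := hR (F a)
    have h2 := hMW (R (F a))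
    rw [hT, ContinuousLinearMap.comp_apply]
    filter_upwards [h1, h2] with x hx1 hx2
    rw [hx2, hx1, integral_kernel_F a ha x]
    push_cast
    ring
  -- separation estimate
  have sep : ∀ a b : ℝ, 2 ≤ a → a + 4 ≤ b → 1/32 ≤ ‖T (F a) - T (F b)‖ := by
    intro a b ha hb
    have ha0 : (0:ℝ) ≤ a := by linarith
    have hb0 : (0:ℝ) ≤ b := by linarith
    set h := T (F a) - T (F b) with hh
    have hae : ⇑h =ᵐ[volume.restrict (Ioi (0:ℝ))]
        fun x => ((Real.sin (x^2) * (g a x - g b x) : ℝ) : ℂ) := by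
      filter_upwards [Lp.coeFn_sub (T (F a)) (T (F b)), hTF a ha0, hTF b hb0]
        with x h0 h1 h2
      rw [hh] at *
      rw [h0, Pi.sub_apply, h1, h2]
      push_cast
      ring
    -- pointwise lower bound on the relevant interval
    have hptwise : ∀ x ∈ Ioc a (a+1),
        (Real.sin (x^2))^2 * (1/256) ≤ (Real.sin (x^2) * (g a x - g b x))^2 := by
      intro x hx
      have h1 : 1/8 ≤ g a x := by
        apply g_lower
        intro y hy
        apply kernel_ge
        · rw [abs_sub_le_iff]
          constructor <;> [skip; skip] <;>
            simp only [mem_Ioc] at hx hy <;> linarith [hx.1, hx.2, hy.1, hy.2]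
        · simp only [mem_Ioc] at hx hy
          linarith [hx.1, hy.1]
      have h2 : g b x ≤ 1/16 := by
        apply g_upper
        intro y hy
        apply kernel_small
        simp only [mem_Ioc] at hx hy
        rw [abs_sub_comm, abs_of_nonneg (by linarith [hx.2, hy.1])]
        linarith [hx.2, hy.1]
      have hd : 1/16 ≤ g a x - g b x := by linarith
      have hdsq : (1/256 : ℝ) ≤ (g a x - g b x)^2 := by nlinarith
      calc (Real.sin (x^2))^2 * (1/256) ≤ (Real.sin (x^2))^2 * ((g a x - g b x)^2) :=
            mul_le_mul_of_nonneg_left hdsq (sq_nonneg _)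
        _ = (Real.sin (x^2) * (g a x - g b x))^2 := by ring
    -- the integral of ‖h‖² over the interval, as a volume integral
    have hmeas_eq := restrict_restrict_Ioc (a := a) ha0
    have hae_vol : ⇑h =ᵐ[volume.restrict (Ioc a (a+1))]
        fun x => ((Real.sin (x^2) * (g a x - g b x) : ℝ) : ℂ) := by
      rw [← hmeas_eq]
      exact hae.filter_mono (ae_mono Measure.restrict_le_self)
    have hIoc_eq : (∫ x in Ioc a (a+1), ‖h x‖^2 ∂(volume.restrict (Ioi (0:ℝ))))
        = ∫ x in Ioc a (a+1), (Real.sin (x^2) * (g a x - g b x))^2 := by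
      rw [hmeas_eq]
      apply integral_congr_ae
      filter_upwards [hae_vol] with x hx
      rw [hx, Complex.norm_real, Real.norm_eq_abs, sq_abs]
    -- integrability of the squared function on the interval
    have hint : Integrable (fun x => ‖h x‖^2) (volume.restrict (Ioi (0:ℝ))) :=
      integrable_norm_sq h
    have hintOn : IntegrableOn (fun x => (Real.sin (x^2) * (g a x - g b x))^2)
        (Ioc a (a+1)) volume := by
      have h1 : Integrable (fun x => ‖h x‖^2)
          ((volume.restrict (Ioi (0:ℝ))).restrict (Ioc a (a+1))) := hint.restrict
      rw [hmeas_eq] at h1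
      apply h1.congr
      filter_upwards [hae_vol] with x hx
      rw [hx, Complex.norm_real, Real.norm_eq_abs, sq_abs]
    -- monotone comparison
    have hmono : (∫ x in Ioc a (a+1), (Real.sin (x^2))^2 * (1/256))
        ≤ ∫ x in Ioc a (a+1), (Real.sin (x^2) * (g a x - g b x))^2 := by
      apply setIntegral_mono_on _ hintOn measurableSet_Ioc hptwise
      apply Integrable.mul_const
      exact Continuous.integrableOn_Ioc (by fun_prop)
    have hval : (∫ x in Ioc a (a+1), (Real.sin (x^2))^2 * (1/256))
        = (∫ x in Ioc a (a+1), (Real.sin (x^2))^2) * (1/256) := by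
      exact integral_mul_const _ _
    have hosc := sin_sq_int_lower a ha
    -- put everything together
    have hnorm_sq : ‖h‖^2 = ∫ x, ‖h x‖^2 ∂(volume.restrict (Ioi (0:ℝ))) := norm_sq_L2 h
    have hset : (∫ x in Ioc a (a+1), ‖h x‖^2 ∂(volume.restrict (Ioi (0:ℝ))))
        ≤ ∫ x, ‖h x‖^2 ∂(volume.restrict (Ioi (0:ℝ))) :=
      setIntegral_le_integral hint (Filter.Eventually.of_forall fun x => sq_nonneg _)
    have hfinal : (1:ℝ)/1024 ≤ ‖h‖^2 := by
      rw [hnorm_sq]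
      calc (1:ℝ)/1024 ≤ (∫ x in Ioc a (a+1), (Real.sin (x^2))^2) * (1/256) := by linarith
        _ = ∫ x in Ioc a (a+1), (Real.sin (x^2))^2 * (1/256) := hval.symm
        _ ≤ ∫ x in Ioc a (a+1), (Real.sin (x^2) * (g a x - g b x))^2 := hmono
        _ = ∫ x in Ioc a (a+1), ‖h x‖^2 ∂(volume.restrict (Ioi (0:ℝ))) := hIoc_eq.symm
        _ ≤ _ := hset
    nlinarith [norm_nonneg h]
  -- derive a contradiction with compactness
  obtain ⟨K, hK, hKmem⟩ := hcomp
  obtain ⟨ε, hε, hball⟩ := Metric.mem_nhds_iff.mp hKmem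
  set c : ℂ := ((ε/2 : ℝ) : ℂ) with hc
  set aseq : ℕ → ℝ := fun j => 2 + 4*j with haseq
  set w : ℕ → Lp ℂ 2 (volume.restrict (Ioi (0:ℝ))) := fun j => T (c • F (aseq j)) with hw
  have haseq0 : ∀ j : ℕ, (0:ℝ) ≤ aseq j := by
    intro j; rw [haseq]; positivity
  have hwK : ∀ j, w j ∈ K := by
    intro j
    have hmem : c • F (aseq j) ∈ Metric.ball (0 : Lp ℂ 2 (volume.restrict (Ioi (0:ℝ)))) ε := by
      rw [mem_ball_zero_iff, norm_smul, norm_F (haseq0 j), mul_one, hc, Complex.norm_real,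
        Real.norm_eq_abs, abs_of_pos (by linarith)]
      linarith
    exact hball hmem
  have hsep : ∀ j k : ℕ, j < k → ε/64 ≤ dist (w j) (w k) := by
    intro j k hjk
    have hj0 : (0:ℝ) ≤ (j:ℝ) := Nat.cast_nonneg j
    have h1 : 2 ≤ aseq j := by simp only [haseq]; linarith
    have h2 : aseq j + 4 ≤ aseq k := by
      rw [haseq]
      have : (j:ℝ) + 1 ≤ k := by exact_mod_cast hjk
      simp only
      linarith
    have hd := sep (aseq j) (aseq k) h1 h2
    rw [dist_eq_norm, hw]
    simp only
    have : T (c • F (aseq j)) - T (c • F (aseq k)) = c • (T (F (aseq j)) - T (F (aseq k))) := by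
      rw [T.map_smul, T.map_smul, smul_sub]
    rw [this, norm_smul, hc, Complex.norm_real, Real.norm_eq_abs,
      abs_of_pos (by linarith : (0:ℝ) < ε/2)]
    calc ε/64 = (ε/2) * (1/32) := by ring
      _ ≤ (ε/2) * ‖T (F (aseq j)) - T (F (aseq k))‖ := by
          apply mul_le_mul_of_nonneg_left hd (by linarith)
  obtain ⟨l, _, φ, hφ, hconv⟩ := hK.tendsto_subseq hwK
  rw [Metric.tendsto_atTop] at hconv
  obtain ⟨N, hN⟩ := hconv (ε/128) (by positivity)
  have d1 := hN N le_rfl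
  have d2 := hN (N+1) (Nat.le_succ N)
  have hlt : φ N < φ (N+1) := hφ (Nat.lt_succ_self N)
  have hges := hsep (φ N) (φ (N+1)) hlt
  have htri : dist (w (φ N)) (w (φ (N+1)))
      ≤ dist (w (φ N)) l + dist (w (φ (N+1))) l := dist_triangle_right _ _ _
  simp only [Function.comp_apply] at d1 d2
  linarith
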